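/- Let G be a subcubic graph that cannot be decomposed into a linear forest and a matching, and suppose G is minimal (with respect to the number of vertices plus edges) with this property. Then G contains no edge both of whose endpoints have degree 2 in G. -/

import Mathlib

/-- A linear forest: an acyclic graph in which every vertex has degree at most 2,
i.e. a disjoint union of paths. -/
def SimpleGraph.IsLinearForest {V : Type*} (H : SimpleGraph V) : Prop :=
  H.IsAcyclic ∧ ∀ v : V, (H.neighborSet v).ncard ≤ 2

/-- `G` decomposes into a linear forest and a matching: its edge set is
partitioned into the edge set of a linear forest and the edge set of a matching. -/
def SimpleGraph.HasLFMatchingDecomp {V : Type*} (G : SimpleGraph V) : Prop :=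
  ∃ F M : SimpleGraph V, F ⊔ M = G ∧ (∀ u v : V, ¬ (F.Adj u v ∧ M.Adj u v)) ∧
    F.IsLinearForest ∧ ∀ v : V, (M.neighborSet v).ncard ≤ 1

open SimpleGraph Walk

section Aux

lemma LFaux.edge_mem_of_not_nil {V : Type*} {G : SimpleGraph V} {x y : V} (p : G.Walk x y)
    (hp : ¬ p.Nil) : s(x, p.getVert 1) ∈ p.edges := by
  cases p with
  | nil => simp at hp
  | cons h q => simp [Walk.getVert_cons_succ]

lemma LFaux.acyclic_sup_edge {V : Type*} {F : SimpleGraph V} {u v : V} (hne : u ≠ v)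
    (hac : F.IsAcyclic) (hu : F.neighborSet u = ∅) :
    (F ⊔ SimpleGraph.edge u v).IsAcyclic := by
  have hadj : ∀ x, (F ⊔ SimpleGraph.edge u v).Adj u x → x = v := by
    intro x hx
    rcases hx with h | h
    · exact absurd (Set.eq_empty_iff_forall_notMem.mp hu x) (by simpa using h)
    · rw [edge_adj] at h
      rcases h.1 with ⟨_, h2⟩ | ⟨h1, _⟩
      · exact h2
      · exact absurd h1 hne
  classical
  intro a c hc
  by_cases he : s(u, v) ∈ c.edges
  · have hus : u ∈ c.support := c.fst_mem_support_of_mem_edges he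
    have hcyc := hc.rotate hus
    set c' := c.rotate u hus with hc'def
    have hn : ¬ c'.Nil := hcyc.not_nil
    rw [← c'.cons_tail_eq hn, Walk.cons_isCycle_iff] at hcyc
    have hw : c'.getVert 1 = v := hadj _ (c'.adj_snd hn)
    set q := c'.tail with hq
    have hqn : ¬ q.reverse.Nil := Walk.not_nil_of_ne (by show u ≠ c'.getVert 1; rw [hw]; exact hne)
    have h2 : q.reverse.getVert 1 = v := hadj _ (q.reverse.adj_snd hqn)
    have hmem := LFaux.edge_mem_of_not_nil q.reverse hqn
    rw [h2, Walk.edges_reverse, List.mem_reverse] at hmem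
    have heq : s(u, c'.getVert 1) = s(u, v) := by rw [hw]
    exact hcyc.2 (by rw [heq]; exact hmem)
  · have hF : ∀ e ∈ c.edges, e ∈ F.edgeSet := by
      intro e hec
      have : e ∈ (F ⊔ SimpleGraph.edge u v).edgeSet := c.edges_subset_edgeSet hec
      rw [edgeSet_sup, edge_edgeSet_of_ne hne] at this
      rcases this with h | h
      · exact h
      · exact absurd (h ▸ hec) he
    exact hac (c.transfer F hF) (hc.transfer hF)

lemma LFaux.ncard_comap_neighborSet {V W : Type*} (e : V ≃ W) (F : SimpleGraph W) (x : V) :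
    ((F.comap e).neighborSet x).ncard = (F.neighborSet (e x)).ncard := by
  rw [show (F.comap ⇑e).neighborSet x = e ⁻¹' (F.neighborSet (e x)) from rfl,
    ← Equiv.image_symm_eq_preimage, Set.ncard_image_of_injective _ e.symm.injective]

lemma LFaux.hasLFMatchingDecomp_of_map {V W : Type*} (e : V ≃ W) {G : SimpleGraph V}
    (h : (G.map e.toEmbedding).HasLFMatchingDecomp) : G.HasLFMatchingDecomp := by
  obtain ⟨F, M, hsup, hdisj, ⟨hFac, hFdeg⟩, hM⟩ := h
  refine ⟨F.comap e, M.comap e, ?_, ?_, ⟨?_, ?_⟩, ?_⟩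
  · ext a b
    have : (F ⊔ M).Adj (e a) (e b) ↔ G.Adj a b := by
      rw [hsup]; exact map_adj_apply (f := e.toEmbedding)
    simpa using this
  · rintro a b ⟨h1, h2⟩
    exact hdisj (e a) (e b) ⟨h1, h2⟩
  · intro a c hc
    let f : (F.comap e) →g F := ⟨e, fun h => h⟩
    have hfi : Function.Injective ⇑f := by
      intro a b h
      exact e.injective h
    exact hFac (c.map f) (hc.map hfi)
  · intro x; rw [LFaux.ncard_comap_neighborSet]; exact hFdeg (e x)
  · intro x; rw [LFaux.ncard_comap_neighborSet]; exact hM (e x)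

lemma LFaux.map_neighborSet {V W : Type*} (e : V ≃ W) (G : SimpleGraph V) (a : V) :
    (G.map e.toEmbedding).neighborSet (e a) = e '' G.neighborSet a := by
  ext y
  simp only [mem_neighborSet, SimpleGraph.map_adj, Set.mem_image]
  constructor
  · rintro ⟨x, z, hxz, hx, hz⟩
    exact ⟨z, by rwa [← e.injective hx], hz⟩
  · rintro ⟨z, hz, rfl⟩
    exact ⟨a, z, hz, rfl, rfl⟩

lemma LFaux.map_edgeSet' {V W : Type*} (e : V ≃ W) (G : SimpleGraph V) :
    (G.map e.toEmbedding).edgeSet = Sym2.map e '' G.edgeSet := by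
  ext f
  induction f using Sym2.ind with
  | _ x y =>
    simp only [SimpleGraph.mem_edgeSet, SimpleGraph.map_adj, Set.mem_image]
    constructor
    · rintro ⟨a, b, hab, ha, hb⟩
      exact ⟨s(a, b), hab, by
        simp only [Sym2.map_pair_eq]
        rw [show (e a : W) = x from ha, show (e b : W) = y from hb]⟩
    · rintro ⟨f, hf, hfm⟩
      induction f using Sym2.ind with
      | _ a b =>
        rw [Sym2.map_pair_eq, Sym2.eq_iff] at hfm
        rcases hfm with ⟨ha, hb⟩ | ⟨ha, hb⟩
        · exact ⟨a, b, hf, ha, hb⟩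
        · exact ⟨b, a, hf.symm, hb, ha⟩

lemma LFaux.map_edgeSet_ncard {V W : Type*} (e : V ≃ W) (G : SimpleGraph V) :
    (G.map e.toEmbedding).edgeSet.ncard = G.edgeSet.ncard := by
  rw [LFaux.map_edgeSet', Set.ncard_image_of_injective _ (Sym2.map.injective e.injective)]

lemma LFaux.edge_neighborSet_fst {V : Type*} {u v : V} (hne : u ≠ v) :
    (SimpleGraph.edge u v).neighborSet u = {v} := by
  ext y
  rw [mem_neighborSet, edge_adj, Set.mem_singleton_iff]
  constructor
  · rintro ⟨⟨_, h2⟩ | ⟨h1, _⟩, _⟩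
    · exact h2
    · exact absurd h1 hne
  · rintro rfl
    exact ⟨Or.inl ⟨rfl, rfl⟩, hne⟩

lemma LFaux.edge_neighborSet_other {V : Type*} {u v x : V} (hxu : x ≠ u) (hxv : x ≠ v) :
    (SimpleGraph.edge u v).neighborSet x = ∅ := by
  ext y
  simp only [mem_neighborSet, edge_adj, Set.mem_empty_iff_false, iff_false]
  rintro ⟨⟨h1, _⟩ | ⟨h1, _⟩, _⟩
  · exact hxu h1
  · exact hxv h1

lemma LFaux.neighborSet_sup {V : Type*} (A B : SimpleGraph V) (x : V) :
    (A ⊔ B).neighborSet x = A.neighborSet x ∪ B.neighborSet x := by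
  ext y; simp [mem_neighborSet]

lemma LFaux.edge_comm' {V : Type*} (u v : V) :
    SimpleGraph.edge u v = SimpleGraph.edge v u := by
  unfold SimpleGraph.edge
  rw [Sym2.eq_swap]

lemma LFaux.deleteEdges_sup_edge {V : Type*} {G : SimpleGraph V} {u v : V} (h : G.Adj u v) :
    G.deleteEdges {s(u, v)} ⊔ SimpleGraph.edge u v = G := by
  ext a b
  simp only [sup_adj, deleteEdges_adj, Set.mem_singleton_iff, edge_adj]
  constructor
  · rintro (⟨h1, _⟩ | ⟨⟨rfl, rfl⟩ | ⟨rfl, rfl⟩, _⟩)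
    exacts [h1, h, h.symm]
  · intro hab
    by_cases he : s(a, b) = s(u, v)
    · right
      refine ⟨?_, hab.ne⟩
      rw [Sym2.eq_iff] at he
      tauto
    · exact Or.inl ⟨hab, he⟩

/-- Extending a linear forest by an edge whose first endpoint is isolated in the forest
and whose second endpoint has forest-degree at most 1. -/
lemma LFaux.linearForest_sup_edge {V : Type*} [Finite V] {F : SimpleGraph V} {u v : V}
    (hne : u ≠ v) (hlf : F.IsLinearForest) (hFu : F.neighborSet u = ∅)
    (hFv : (F.neighborSet v).ncard ≤ 1) :
    (F ⊔ SimpleGraph.edge u v).IsLinearForest := by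
  refine ⟨LFaux.acyclic_sup_edge hne hlf.1 hFu, ?_⟩
  intro x
  rw [LFaux.neighborSet_sup]
  by_cases hxu : x = u
  · subst hxu
    rw [hFu, LFaux.edge_neighborSet_fst hne]
    simp
  · by_cases hxv : x = v
    · subst hxv
      rw [LFaux.edge_comm', LFaux.edge_neighborSet_fst hne.symm]
      calc (F.neighborSet x ∪ {u}).ncard ≤ (F.neighborSet x).ncard + ({u} : Set V).ncard :=
            Set.ncard_union_le _ _
        _ ≤ 1 + 1 := by simp [hFv]
        _ = 2 := rfl
    · rw [LFaux.edge_neighborSet_other hxu hxv, Set.union_empty]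
      exact hlf.2 x

end Aux


lemma LFaux.deleteEdges_neighborSet {V : Type*} (G : SimpleGraph V) {u v : V} (hne : u ≠ v) :
    (G.deleteEdges {s(u, v)}).neighborSet u = G.neighborSet u \ {v} := by
  ext y
  simp only [mem_neighborSet, SimpleGraph.deleteEdges_adj, Set.mem_singleton_iff, Set.mem_diff,
    Set.mem_singleton_iff]
  refine and_congr_right' (not_congr ?_)
  rw [Sym2.congr_right]

/-- a minimal (w.r.t. number of vertices plus edges) subcubic graph
that does not decompose into a linear forest and a matching contains no edge
both of whose endpoints have degree 2. -/
theorem stmt6 {V : Type*} [Fintype V] (G : SimpleGraph V)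
    (hsub : ∀ v : V, (G.neighborSet v).ncard ≤ 3)
    (hno : ¬ G.HasLFMatchingDecomp)
    (hmin : ∀ (n : ℕ) (H : SimpleGraph (Fin n)),
      n + H.edgeSet.ncard < Fintype.card V + G.edgeSet.ncard →
      (∀ v, (H.neighborSet v).ncard ≤ 3) → H.HasLFMatchingDecomp) :
    ∀ u v : V, G.Adj u v →
      ¬ ((G.neighborSet u).ncard = 2 ∧ (G.neighborSet v).ncard = 2) := by
  classical
  rintro u v huv ⟨hu2, hv2⟩
  have hne : u ≠ v := huv.ne
  apply hno
  set G' := G.deleteEdges {s(u, v)} with hG'def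
  have hEmem : s(u, v) ∈ G.edgeSet := huv
  have hE' : G'.edgeSet = G.edgeSet \ {s(u, v)} := G.edgeSet_deleteEdges _
  have hcard : G'.edgeSet.ncard < G.edgeSet.ncard := by
    rw [hE']
    exact Set.ncard_diff_singleton_lt_of_mem hEmem (Set.toFinite _)
  have hsubN : ∀ x, G'.neighborSet x ⊆ G.neighborSet x := fun x y hy => hy.1
  have hdegG' : ∀ x, (G'.neighborSet x).ncard ≤ 3 := fun x =>
    le_trans (Set.ncard_le_ncard (hsubN x) (Set.toFinite _)) (hsub x)
  have hNu : G'.neighborSet u = G.neighborSet u \ {v} :=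
    LFaux.deleteEdges_neighborSet G hne
  have hNv : G'.neighborSet v = G.neighborSet v \ {u} := by
    rw [hG'def, show s(u, v) = s(v, u) from Sym2.eq_swap]
    exact LFaux.deleteEdges_neighborSet G hne.symm
  have hdu : (G'.neighborSet u).ncard = 1 := by
    rw [hNu, Set.ncard_diff_singleton_of_mem (show v ∈ G.neighborSet u from huv), hu2]
  have hdv : (G'.neighborSet v).ncard = 1 := by
    rw [hNv, Set.ncard_diff_singleton_of_mem (show u ∈ G.neighborSet v from huv.symm), hv2]
  -- get a decomposition of G' via minimality
  set e := Fintype.equivFin V with he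
  have hH := hmin (Fintype.card V) (G'.map e.toEmbedding)
    (by rw [LFaux.map_edgeSet_ncard]; exact Nat.add_lt_add_left hcard _)
    (by
      intro w
      obtain ⟨x, rfl⟩ := e.surjective w
      rw [LFaux.map_neighborSet, Set.ncard_image_of_injective _ e.injective]
      exact hdegG' x)
  obtain ⟨F, M, hsup, hdisj, hFlf, hMdeg⟩ := LFaux.hasLFMatchingDecomp_of_map e hH
  have hFle : F ≤ G' := hsup ▸ le_sup_left
  have hMle : M ≤ G' := hsup ▸ le_sup_right
  have hG'uv : ¬ G'.Adj u v := by simp [hG'def]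
  have hFuv : ¬ F.Adj u v := fun h => hG'uv (hFle h)
  have hMuv : ¬ M.Adj u v := fun h => hG'uv (hMle h)
  have hsupG : G' ⊔ SimpleGraph.edge u v = G := LFaux.deleteEdges_sup_edge huv
  have hsplit : ∀ x, G'.neighborSet x = F.neighborSet x ∪ M.neighborSet x := by
    intro x; rw [← hsup, LFaux.neighborSet_sup]
  have hdisjN : ∀ x, Disjoint (F.neighborSet x) (M.neighborSet x) := by
    intro x
    rw [Set.disjoint_left]
    intro y hF hM
    exact hdisj x y ⟨hF, hM⟩
  have hsum : ∀ x,
      (F.neighborSet x).ncard + (M.neighborSet x).ncard = (G'.neighborSet x).ncard := by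
    intro x
    rw [hsplit x, Set.ncard_union_eq (hdisjN x) (Set.toFinite _) (Set.toFinite _)]
  by_cases hFu : F.neighborSet u = ∅
  · -- u is isolated in F : add uv to F
    refine ⟨F ⊔ SimpleGraph.edge u v, M, ?_, ?_, ?_, hMdeg⟩
    · rw [sup_right_comm, hsup, hsupG]
    · rintro a b ⟨hF', hM'⟩
      rcases hF' with hF' | hE
      · exact hdisj a b ⟨hF', hM'⟩
      · rw [edge_adj] at hE
        rcases hE.1 with ⟨rfl, rfl⟩ | ⟨rfl, rfl⟩
        · exact hMuv hM'
        · exact hMuv hM'.symm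
    · have hFv1 : (F.neighborSet v).ncard ≤ 1 := by
        have := hsum v; rw [hdv] at this; omega
      exact LFaux.linearForest_sup_edge hne hFlf hFu hFv1
  · by_cases hFv : F.neighborSet v = ∅
    · -- v is isolated in F : add vu to F
      refine ⟨F ⊔ SimpleGraph.edge v u, M, ?_, ?_, ?_, hMdeg⟩
      · rw [← LFaux.edge_comm', sup_right_comm, hsup, hsupG]
      · rintro a b ⟨hF', hM'⟩
        rcases hF' with hF' | hE
        · exact hdisj a b ⟨hF', hM'⟩
        · rw [edge_adj] at hE
          rcases hE.1 with ⟨rfl, rfl⟩ | ⟨rfl, rfl⟩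
          · exact hMuv hM'.symm
          · exact hMuv hM'
      · have hFu1 : (F.neighborSet u).ncard ≤ 1 := by
          have := hsum u; rw [hdu] at this; omega
        exact LFaux.linearForest_sup_edge hne.symm hFlf hFv hFu1
    · -- both u and v have an F-neighbor : they are M-unmatched, add uv to M
      have hMu : M.neighborSet u = ∅ := by
        have h1 : 0 < (F.neighborSet u).ncard :=
          (Set.ncard_pos (Set.toFinite _)).mpr (Set.nonempty_iff_ne_empty.mpr hFu)
        have := hsum u; rw [hdu] at this
        have : (M.neighborSet u).ncard = 0 := by omega
        exact (Set.ncard_eq_zero (Set.toFinite _)).mp this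
      have hMv : M.neighborSet v = ∅ := by
        have h1 : 0 < (F.neighborSet v).ncard :=
          (Set.ncard_pos (Set.toFinite _)).mpr (Set.nonempty_iff_ne_empty.mpr hFv)
        have := hsum v; rw [hdv] at this
        have : (M.neighborSet v).ncard = 0 := by omega
        exact (Set.ncard_eq_zero (Set.toFinite _)).mp this
      refine ⟨F, M ⊔ SimpleGraph.edge u v, ?_, ?_, hFlf, ?_⟩
      · rw [← sup_assoc, hsup, hsupG]
      · rintro a b ⟨hF', hM'⟩
        rcases hM' with hM' | hE
        · exact hdisj a b ⟨hF', hM'⟩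
        · rw [edge_adj] at hE
          rcases hE.1 with ⟨rfl, rfl⟩ | ⟨rfl, rfl⟩
          · exact hFuv hF'
          · exact hFuv hF'.symm
      · intro x
        rw [LFaux.neighborSet_sup]
        by_cases hxu : x = u
        · subst hxu
          rw [hMu, LFaux.edge_neighborSet_fst hne, Set.empty_union]
          simp
        · by_cases hxv : x = v
          · subst hxv
            rw [hMv, LFaux.edge_comm', LFaux.edge_neighborSet_fst hne.symm, Set.empty_union]
            simp
          · rw [LFaux.edge_neighborSet_other hxu hxv, Set.union_empty]
            exact hMdeg x
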